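/- Define the iteration w⁽¹⁾ = E₀/s + max_{1 ≤ l ≤ m} 1/γ_l and w⁽ᵏ⁺¹⁾ = F(w⁽ᵏ⁾) for k ≥ 1. Then: (i) every iterate w⁽ᵏ⁾ is positive; (ii) the sequence (w⁽ᵏ⁾) is nonincreasing; (iii) it converges to a limit w* > 0 satisfying F(w*) = w*; and (iv) w* dominates every sub-fixed point: for every x > 0 with x ≤ F(x) one has x ≤ w*. In particular w* is the largest w > 0 with w ≤ F(w), i.e., the throughput-maximizing water level. -/

import Mathlib

/-!
On `(0, ∞)` the map `F` is monotone and continuous, and since the budgets are nonnegative it maps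
`[c, ∞)` into itself for `c = min_l 1/γ_l`; taking the first slot in `w^e` gives
`F w ≤ E₀/s + 1/γ₁ ≤ w⁽¹⁾`. So `w⁽¹⁾` is a supersolution: the iterates decrease, stay above `c`,
and converge to their infimum, a fixed point by continuity. Any `x > 0` with `x ≤ F x` also
satisfies `x ≤ w⁽¹⁾`, and monotonicity keeps it below every iterate, hence below the limit.
-/

open Finset

/-- Energy water-level bound `w^e(w)`. -/
noncomputable def wEnergy (m : ℕ) (γ : ℕ → ℝ) (s : ℝ) (E : ℕ → ℝ) (w : ℝ) : ℝ :=
  ⨅ u : Fin m,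
    (E u + s * ∑ l ∈ Finset.Icc 1 ((u : ℕ) + 1), min (1 / γ l) w) /
      (s * ((u : ℕ) + 1))

/-- Data water-level bound `w^b(w)`. -/
noncomputable def wData (m : ℕ) (γ : ℕ → ℝ) (s W : ℝ) (D : ℕ → ℝ) (w : ℝ) : ℝ :=
  (2 : ℝ) ^
    (⨅ v : Fin m,
      (D v + s * W * ∑ l ∈ Finset.Icc 1 ((v : ℕ) + 1),
          Real.logb 2 (min (1 / γ l) w)) /
        (s * W * ((v : ℕ) + 1)))

/-- The iteration map `F(w) = min(w^e(w), w^b(w))`. -/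
noncomputable def Fmap (m : ℕ) (γ : ℕ → ℝ) (s W : ℝ) (E D : ℕ → ℝ) (w : ℝ) : ℝ :=
  min (wEnergy m γ s E w) (wData m γ s W D w)

open Set Filter Topology Function

theorem continuousAt_ciInf_of_finite {X α ι : Type*} [TopologicalSpace X]
    [ConditionallyCompleteLinearOrder α] [TopologicalSpace α] [OrderTopology α] [Fintype ι]
    {f : ι → X → α} {x : X} (hf : ∀ i, ContinuousAt (f i) x) :
    ContinuousAt (fun y => ⨅ i, f i y) x := by
  cases isEmpty_or_nonempty ι
  · simp only [iInf_of_isEmpty]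
    exact continuousAt_const
  · simpa only [← Finset.inf'_univ_eq_ciInf] using
      ContinuousAt.finset_inf'_apply univ_nonempty fun i _ => hf i

theorem succ_eq_iterate_of_succ_eq {α : Type*} {f : α → α} {x : ℕ → α}
    (h : ∀ k, 1 ≤ k → x (k + 1) = f (x k)) (k : ℕ) : x (k + 1) = f^[k] (x 1) := by
  induction k with
  | zero => rfl
  | succ k ih => rw [h (k + 1) k.succ_pos, ih, iterate_succ_apply']

section MonotoneIteration

variable {f : ℝ → ℝ} {S : Set ℝ} {a : ℝ}

theorem MonotoneOn.antitone_iterate_of_map_le (hf : MonotoneOn f S) (hS : MapsTo f S S)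
    (ha : a ∈ S) (hfa : f a ≤ a) : Antitone fun n => f^[n] a := by
  refine antitone_nat_of_succ_le fun n => ?_
  induction n with
  | zero => exact hfa
  | succ n ih =>
    simpa only [iterate_succ_apply'] using hf (hS.iterate _ ha) (hS.iterate _ ha) ih

theorem MonotoneOn.le_iterate_of_le_map (hf : MonotoneOn f S) (hS : MapsTo f S S) (ha : a ∈ S)
    {y : ℝ} (hy : y ∈ S) (hyf : y ≤ f y) (hya : y ≤ a) (n : ℕ) : y ≤ f^[n] a := by
  induction n with
  | zero => exact hya
  | succ n ih =>
    rw [iterate_succ_apply']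
    exact hyf.trans (hf hy (hS.iterate _ ha) ih)

theorem MonotoneOn.exists_tendsto_iterate_isFixedPt {c : ℝ} (hf : MonotoneOn f S)
    (hS : MapsTo f S S) (hcont : ∀ x ∈ S, ContinuousAt f x) (hcS : Ici c ⊆ S)
    (hc : MapsTo f (Ici c) (Ici c)) (hca : c ≤ a) (hfa : f a ≤ a) :
    ∃ L, c ≤ L ∧ Tendsto (fun n => f^[n] a) atTop (𝓝 L) ∧ IsFixedPt f L ∧
      ∀ y ∈ S, y ≤ f y → y ≤ a → y ≤ L := by
  have ha : a ∈ S := hcS hca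
  have hlow : ∀ n, c ≤ f^[n] a := fun n => hc.iterate n hca
  have hL : Tendsto (fun n => f^[n] a) atTop (𝓝 (⨅ n, f^[n] a)) :=
    tendsto_atTop_ciInf (hf.antitone_iterate_of_map_le hS ha hfa)
      ⟨c, forall_mem_range.2 hlow⟩
  have hcL : c ≤ ⨅ n, f^[n] a := le_ciInf hlow
  exact ⟨_, hcL, hL, isFixedPt_of_tendsto_iterate hL (hcont _ (hcS hcL)),
    fun y hy hyf hya => le_ciInf (hf.le_iterate_of_le_map hS ha hy hyf hya)⟩

end MonotoneIteration

noncomputable def cumBound (m : ℕ) (γ : ℕ → ℝ) (K : ℝ) (B : ℕ → ℝ) (φ : ℝ → ℝ) (w : ℝ) : ℝ :=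
  ⨅ u : Fin m,
    (B u + K * ∑ l ∈ Finset.Icc 1 ((u : ℕ) + 1), φ (min (1 / γ l) w)) / (K * ((u : ℕ) + 1))

section CumBound

variable {m : ℕ} {γ : ℕ → ℝ} {K : ℝ} {B : ℕ → ℝ} {φ : ℝ → ℝ}

theorem exists_pos_le_one_div (hm : 1 ≤ m) (hγ : ∀ l, 1 ≤ l → l ≤ m → 0 < γ l) :
    ∃ c > 0, ∀ l, 1 ≤ l → l ≤ m → c ≤ 1 / γ l := by
  refine ⟨(Finset.Icc 1 m).inf' (Finset.nonempty_Icc.mpr hm) fun l => 1 / γ l, ?_, ?_⟩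
  · exact (Finset.lt_inf'_iff _).2 fun l hl =>
      one_div_pos.2 (hγ l (Finset.mem_Icc.1 hl).1 (Finset.mem_Icc.1 hl).2)
  · exact fun l h1 h2 => Finset.inf'_le _ (Finset.mem_Icc.2 ⟨h1, h2⟩)

theorem min_one_div_pos (hγ : ∀ l, 1 ≤ l → l ≤ m → 0 < γ l) (u : Fin m) {l : ℕ}
    (hl : l ∈ Finset.Icc 1 ((u : ℕ) + 1)) {w : ℝ} (hw : 0 < w) : 0 < min (1 / γ l) w := by
  rw [Finset.mem_Icc] at hl
  have := hγ l hl.1 (hl.2.trans u.isLt)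
  positivity

theorem cumBound_monotoneOn (hK : 0 < K) (hφ : MonotoneOn φ (Ioi 0))
    (hγ : ∀ l, 1 ≤ l → l ≤ m → 0 < γ l) : MonotoneOn (cumBound m γ K B φ) (Ioi 0) := by
  intro a ha b _ hab
  refine ciInf_mono (finite_range _).bddBelow fun u => ?_
  gcongr with l hl
  exact hφ (min_one_div_pos hγ u hl ha) (min_one_div_pos hγ u hl (ha.trans_le hab))
    (min_le_min_left _ hab)

theorem cumBound_continuousAt (hφ : ContinuousOn φ (Ioi 0))
    (hγ : ∀ l, 1 ≤ l → l ≤ m → 0 < γ l) {x : ℝ} (hx : 0 < x) :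
    ContinuousAt (cumBound m γ K B φ) x := by
  refine continuousAt_ciInf_of_finite fun u => ContinuousAt.div_const ?_ _
  refine continuousAt_const.add (continuousAt_const.mul (tendsto_finsetSum _ fun l hl => ?_))
  exact (hφ.continuousAt (Ioi_mem_nhds (min_one_div_pos hγ u hl hx))).comp
    (continuousAt_const.min continuousAt_id)

theorem le_cumBound (hm : 0 < m) (hK : 0 < K) (hB : ∀ u < m, 0 ≤ B u)
    (hφ : MonotoneOn φ (Ioi 0)) {c w : ℝ} (hc : 0 < c)
    (hcγ : ∀ l, 1 ≤ l → l ≤ m → c ≤ 1 / γ l) (hcw : c ≤ w) : φ c ≤ cumBound m γ K B φ w := by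
  have : Nonempty (Fin m) := ⟨⟨0, hm⟩⟩
  refine le_ciInf fun u => ?_
  rw [le_div_iff₀ (by positivity)]
  have hsum : ((u : ℕ) + 1 : ℝ) * φ c ≤
      ∑ l ∈ Finset.Icc 1 ((u : ℕ) + 1), φ (min (1 / γ l) w) := by
    have := Finset.card_nsmul_le_sum (Finset.Icc 1 ((u : ℕ) + 1))
      (fun l => φ (min (1 / γ l) w)) (φ c) fun l hl => by
      rw [Finset.mem_Icc] at hl
      have hcl := le_min (hcγ l hl.1 (hl.2.trans u.isLt)) hcw
      exact hφ hc (hc.trans_le hcl) hcl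
    simpa only [Nat.card_Icc, add_tsub_cancel_right, nsmul_eq_mul, Nat.cast_add,
      Nat.cast_one] using this
  nlinarith [hB u u.isLt]

theorem cumBound_le (hm : 0 < m) (hK : K ≠ 0) (w : ℝ) :
    cumBound m γ K B φ w ≤ B 0 / K + φ (min (1 / γ 1) w) := by
  refine (ciInf_le (finite_range _).bddBelow ⟨0, hm⟩).trans_eq ?_
  simp only [Nat.cast_zero, zero_add, Finset.Icc_self, Finset.sum_singleton, mul_one]
  rw [add_div, mul_div_cancel_left₀ _ hK]

end CumBound

section Fmap

variable {m : ℕ} {γ : ℕ → ℝ} {s W : ℝ} {E D : ℕ → ℝ}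

theorem Fmap_eq_min_cumBound (w : ℝ) : Fmap m γ s W E D w =
    min (cumBound m γ s E id w) (2 ^ cumBound m γ (s * W) D (Real.logb 2) w) := rfl

theorem Fmap_monotoneOn (hγ : ∀ l, 1 ≤ l → l ≤ m → 0 < γ l) (hs : 0 < s) (hW : 0 < W) :
    MonotoneOn (Fmap m γ s W E D) (Ioi 0) := fun a ha b hb hab => by
  rw [Fmap_eq_min_cumBound, Fmap_eq_min_cumBound]
  exact min_le_min (cumBound_monotoneOn hs monotoneOn_id hγ ha hb hab)
    (Real.rpow_le_rpow_of_exponent_le one_le_two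
      (cumBound_monotoneOn (mul_pos hs hW) (Real.strictMonoOn_logb one_lt_two).monotoneOn hγ
        ha hb hab))

theorem Fmap_continuousAt (hγ : ∀ l, 1 ≤ l → l ≤ m → 0 < γ l) {x : ℝ} (hx : 0 < x) :
    ContinuousAt (Fmap m γ s W E D) x := by
  simp only [funext Fmap_eq_min_cumBound]
  exact (cumBound_continuousAt continuousOn_id hγ hx).min
    ((Real.continuousAt_const_rpow two_ne_zero).comp
      (cumBound_continuousAt (Real.continuousOn_logb.mono fun _ h => ne_of_gt h) hγ hx))

theorem min_le_Fmap (hm : 0 < m) (hs : 0 < s) (hW : 0 < W) (hE : ∀ u < m, 0 ≤ E u)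
    (hD : ∀ v < m, 0 ≤ D v) {c : ℝ} (hc : 0 < c) (hcγ : ∀ l, 1 ≤ l → l ≤ m → c ≤ 1 / γ l)
    {w : ℝ} (hw : 0 < w) : min c w ≤ Fmap m γ s W E D w := by
  have hc' : 0 < min c w := lt_min hc hw
  have hcγ' : ∀ l, 1 ≤ l → l ≤ m → min c w ≤ 1 / γ l := fun l h1 h2 =>
    min_le_of_left_le (hcγ l h1 h2)
  rw [Fmap_eq_min_cumBound]
  refine le_min (le_cumBound hm hs hE monotoneOn_id hc' hcγ' (min_le_right c w)) ?_
  calc min c w = 2 ^ Real.logb 2 (min c w) := (Real.rpow_logb two_pos one_lt_two.ne' hc').symm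
    _ ≤ _ := Real.rpow_le_rpow_of_exponent_le one_le_two
      (le_cumBound hm (mul_pos hs hW) hD (Real.strictMonoOn_logb one_lt_two).monotoneOn hc'
        hcγ' (min_le_right c w))

theorem mapsTo_Fmap_Ioi (hm : 0 < m) (hs : 0 < s) (hW : 0 < W) (hE : ∀ u < m, 0 ≤ E u)
    (hD : ∀ v < m, 0 ≤ D v) {c : ℝ} (hc : 0 < c) (hcγ : ∀ l, 1 ≤ l → l ≤ m → c ≤ 1 / γ l) :
    MapsTo (Fmap m γ s W E D) (Ioi 0) (Ioi 0) := fun _ hw =>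
  (lt_min hc hw).trans_le (min_le_Fmap hm hs hW hE hD hc hcγ hw)

theorem mapsTo_Fmap_Ici (hm : 0 < m) (hs : 0 < s) (hW : 0 < W) (hE : ∀ u < m, 0 ≤ E u)
    (hD : ∀ v < m, 0 ≤ D v) {c : ℝ} (hc : 0 < c) (hcγ : ∀ l, 1 ≤ l → l ≤ m → c ≤ 1 / γ l) :
    MapsTo (Fmap m γ s W E D) (Ici c) (Ici c) := fun w (hw : c ≤ w) => show c ≤ _ by
  simpa only [min_eq_left hw] using min_le_Fmap hm hs hW hE hD hc hcγ (hc.trans_le hw)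

theorem Fmap_le (hm : 0 < m) (hs : 0 < s) (w : ℝ) :
    Fmap m γ s W E D w ≤ E 0 / s + min (1 / γ 1) w :=
  (min_le_left _ _).trans (cumBound_le (B := E) (φ := id) hm hs.ne' w)

end Fmap

/-- The iteration `w⁽¹⁾ = E₀/s + max_l 1/γ_l`, `w⁽ᵏ⁺¹⁾ = F(w⁽ᵏ⁾)`
stays positive, is nonincreasing, and converges to the largest fixed point of F,
which dominates every sub-fixed point. -/
theorem stmt_10 (m : ℕ) (hm : 1 ≤ m) (γ : ℕ → ℝ)
    (hγ : ∀ l, 1 ≤ l → l ≤ m → 0 < γ l) (s W : ℝ) (hs : 0 < s) (hW : 0 < W)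
    (E D : ℕ → ℝ) (hE : ∀ u, u ≤ m - 1 → 0 ≤ E u) (hD : ∀ v, v ≤ m - 1 → 0 ≤ D v)
    (wSeq : ℕ → ℝ)
    (hInit : wSeq 1 = E 0 / s +
      (Finset.Icc 1 m).sup' (Finset.nonempty_Icc.mpr hm) (fun l => 1 / γ l))
    (hStep : ∀ k, 1 ≤ k → wSeq (k + 1) = Fmap m γ s W E D (wSeq k)) :
    (∀ k, 1 ≤ k → 0 < wSeq k) ∧
    (∀ k, 1 ≤ k → wSeq (k + 1) ≤ wSeq k) ∧
    (∃ wStar : ℝ, 0 < wStar ∧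
      Filter.Tendsto wSeq Filter.atTop (nhds wStar) ∧
      Fmap m γ s W E D wStar = wStar ∧
      (∀ x : ℝ, 0 < x → x ≤ Fmap m γ s W E D x → x ≤ wStar)) := by
  set F := Fmap m γ s W E D
  have hiter := succ_eq_iterate_of_succ_eq hStep
  obtain ⟨c, hc, hcγ⟩ := exists_pos_le_one_div hm hγ
  have hE' : ∀ u < m, 0 ≤ E u := fun u hu => hE u (by omega)
  have hD' : ∀ v < m, 0 ≤ D v := fun v hv => hD v (by omega)
  have hFpos : MapsTo F (Ioi 0) (Ioi 0) := mapsTo_Fmap_Ioi hm hs hW hE' hD' hc hcγ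
  have hFc : MapsTo F (Ici c) (Ici c) := mapsTo_Fmap_Ici hm hs hW hE' hD' hc hcγ
  have hmono : MonotoneOn F (Ioi 0) := Fmap_monotoneOn hγ hs hW
  have hF_le : ∀ w, F w ≤ wSeq 1 := fun w => (Fmap_le hm hs w).trans <| by
    rw [hInit]
    gcongr
    exact (min_le_left _ _).trans
      (Finset.le_sup' (fun l => 1 / γ l) (Finset.mem_Icc.2 ⟨le_rfl, hm⟩))
  have hc1 : c ≤ wSeq 1 := (hFc (le_refl c)).trans (hF_le c)
  obtain ⟨L, hcL, hL, hfix, hmax⟩ := hmono.exists_tendsto_iterate_isFixedPt hFpos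
    (fun x hx => Fmap_continuousAt hγ hx) (Ici_subset_Ioi.2 hc) hFc hc1 (hF_le _)
  refine ⟨fun k hk => ?_, fun k hk => ?_, L, hc.trans_le hcL, ?_, hfix,
    fun x hx hxF => hmax x hx hxF (hxF.trans (hF_le x))⟩
  · obtain ⟨n, rfl⟩ := Nat.exists_eq_add_of_le' hk
    rw [hiter]
    exact hc.trans_le (hFc.iterate n hc1)
  · obtain ⟨n, rfl⟩ := Nat.exists_eq_add_of_le' hk
    rw [hiter (n + 1), hiter n]
    exact hmono.antitone_iterate_of_map_le hFpos (hc.trans_le hc1) (hF_le _) n.le_succ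
  · exact (tendsto_add_atTop_iff_nat 1).1 (hL.congr fun n => (hiter n).symm)
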